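/- arXiv:2306.13228 — 3 statements merged into one kernel-verified Lean document; each statement's English description precedes it below -/
import Mathlib

section
/- For every Δ > 0, the function r_Δ is given explicitly by r_Δ(t) = Σ_{k=0}^{n} ((−1)^k / (2k)!) · (t − (k−1)Δ)^{2k} for t ∈ [(n−1)Δ, nΔ], n = 1, 2, ...; in particular r_Δ(t) = 1 − t²/2 for t ∈ [0, Δ] and r_Δ(t) = 1 − t²/2 + (t − Δ)⁴/24 for t ∈ [Δ, 2Δ]. -/
open MeasureTheory Set Filter

/-- `x` solves the delay equation `x''(t) + p(t)·x(t − τ(t)) = 0` on `I` in the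
Carathéodory sense: `x` is differentiable on `I` and on `I` its derivative is an
indefinite integral of `-p(u)·x(u − τ(u))` (so `x` and its derivative are locally
absolutely continuous there, and the equation holds for a.e. `t ∈ I`). -/
def SolvesDDE (p τ x : ℝ → ℝ) (I : Set ℝ) : Prop :=
  (∀ t ∈ I, HasDerivAt x (deriv x t) t) ∧
  (∀ t₀ ∈ I, ∀ t ∈ I, deriv x t = deriv x t₀ - ∫ u in t₀..t, p u * x (u - τ u))

/-- `r` is the solution `r_Δ` of `r''(t) + r(t − Δ) = 0`, `t ≥ 0`, with `r ≡ 1` on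
`(-∞,0]` and `r'(0) = 0` (the derivative is an indefinite integral of `-r(· - Δ)`). -/
def IsDelayCosine (Δ : ℝ) (r : ℝ → ℝ) : Prop :=
  (∀ t ≤ (0:ℝ), r t = 1) ∧
  (∀ t, 0 ≤ t → HasDerivAt r (deriv r t) t) ∧
  (∀ t, 0 ≤ t → deriv r t = - ∫ u in (0:ℝ)..t, r (u - Δ))

/-- `θ` is the first zero of `r` on `[0,∞)`. -/
def IsFirstZero (r : ℝ → ℝ) (θ : ℝ) : Prop :=
  0 < θ ∧ r θ = 0 ∧ ∀ t, 0 ≤ t → t < θ → 0 < r t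

/-- `g(w) = ρ·r(θ − w − Δ)·χ_{[−Δ,0]}(w)`. -/
noncomputable def gAux (ρ Δ θ : ℝ) (r : ℝ → ℝ) : ℝ → ℝ :=
  (Set.Icc (-Δ) (0:ℝ)).indicator fun w => ρ * r (θ - w - Δ)

/-- The double integral `∫_{-c}^0 (∫_{-c}^s max (β w) (g w) dw) ds`. -/
noncomputable def doubleInt (g β : ℝ → ℝ) (c : ℝ) : ℝ :=
  ∫ s in (-c)..(0:ℝ), ∫ w in (-c)..s, max (β w) (g w)

/-- The recursively defined sequences `β_n`, `ϖ_n` associated with `g`. -/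
def IsBetaSeq (g : ℝ → ℝ) (β : ℕ → ℝ → ℝ) (ϖ : ℕ → ℝ) : Prop :=
  (∀ t ≤ (0:ℝ), β 0 t = 1) ∧
  ∀ n : ℕ,
    (0 < ϖ n ∧ doubleInt g (β n) (ϖ n) = 1) ∧
    (∀ t, t ≤ -ϖ n → β (n+1) t = 1) ∧
    (∀ t, -ϖ n ≤ t → t ≤ 0 →
      β (n+1) t = 1 - ∫ s in (-ϖ n)..t, ∫ w in (-ϖ n)..s, max (β n w) (g w))

/-- `x` has a locally absolutely continuous derivative on `[a,b]`, with a.e. second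
derivative `w`. -/
def HasSecondDerivAEOn (x w : ℝ → ℝ) (a b : ℝ) : Prop :=
  (∀ t ∈ Set.Icc a b, HasDerivAt x (deriv x t) t) ∧
  (∀ t ∈ Set.Icc a b, deriv x t = deriv x a + ∫ u in a..t, w u)

/-! Method of steps. On `[nΔ, (n+1)Δ]` the delayed term `r(t - Δ)` only sees the previous
interval, where `r` is already known to be the polynomial `Pₙ = delayCosPoly Δ n`. The delayed
cosine and sine polynomials satisfy `Pₙ₊₁' = -Sₙ` and `Sₙ' = Pₙ(· - Δ)`, so by uniqueness of
antiderivatives `r' = -Sₙ` and then `r = Pₙ₊₁` on the new interval, once the values at `nΔ`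
match. They do because the term added to `Pₙ₊₁` vanishes at `nΔ`, and the one added to `Sₙ₊₁`
vanishes at `(n+1)Δ`. -/

noncomputable def delayCosPoly (Δ : ℝ) (n : ℕ) (t : ℝ) : ℝ :=
  ∑ k ∈ Finset.range (n + 1),
    ((-1 : ℝ) ^ k / (Nat.factorial (2 * k) : ℝ)) * (t - ((k : ℝ) - 1) * Δ) ^ (2 * k)

noncomputable def delaySinPoly (Δ : ℝ) (n : ℕ) (t : ℝ) : ℝ :=
  ∑ k ∈ Finset.range (n + 1),
    ((-1 : ℝ) ^ k / (Nat.factorial (2 * k + 1) : ℝ)) * (t - (k : ℝ) * Δ) ^ (2 * k + 1)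

section DelayPolynomials

variable (Δ : ℝ) (n : ℕ)

theorem delayCosPoly_zero (t : ℝ) : delayCosPoly Δ 0 t = 1 := by
  simp [delayCosPoly]

theorem delayCosPoly_succ_natCast_mul :
    delayCosPoly Δ (n + 1) (n * Δ) = delayCosPoly Δ n (n * Δ) := by
  rw [delayCosPoly, Finset.sum_range_succ, ← delayCosPoly]
  push_cast
  simp

theorem delaySinPoly_succ_natCast_mul :
    delaySinPoly Δ (n + 1) ((n + 1) * Δ) = delaySinPoly Δ n ((n + 1) * Δ) := by
  rw [delaySinPoly, Finset.sum_range_succ, ← delaySinPoly]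
  push_cast
  simp

theorem hasDerivAt_delaySinPoly (t : ℝ) :
    HasDerivAt (delaySinPoly Δ n) (delayCosPoly Δ n (t - Δ)) t := by
  unfold delaySinPoly delayCosPoly
  refine HasDerivAt.fun_sum fun k _ => ?_
  have hfac : ((2 * k + 1).factorial : ℝ) = (2 * k + 1) * (2 * k).factorial := by
    push_cast [Nat.factorial_succ]; ring
  refine ((((hasDerivAt_id' t).sub_const ((k : ℝ) * Δ)).pow (2 * k + 1)).const_mul
    ((-1 : ℝ) ^ k / ((2 * k + 1).factorial : ℝ))).congr_deriv ?_
  rw [hfac]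
  field_simp
  push_cast
  ring

theorem hasDerivAt_delayCosPoly_succ (t : ℝ) :
    HasDerivAt (delayCosPoly Δ (n + 1)) (-delaySinPoly Δ n t) t := by
  have hsum : delayCosPoly Δ (n + 1) = fun t => 1 + ∑ k ∈ Finset.range (n + 1),
      ((-1 : ℝ) ^ (k + 1) / ((2 * k + 2).factorial : ℝ)) * (t - k * Δ) ^ (2 * k + 2) := by
    ext t
    rw [delayCosPoly, Finset.sum_range_succ']
    push_cast
    simp only [mul_add, mul_one, add_sub_cancel_right]
    ring
  rw [hsum, delaySinPoly, ← Finset.sum_neg_distrib]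
  refine (HasDerivAt.fun_sum fun k _ => ?_).const_add 1
  have hfac : ((2 * k + 2).factorial : ℝ) = (2 * k + 2) * (2 * k + 1).factorial := by
    push_cast [Nat.factorial_succ]; ring
  refine ((((hasDerivAt_id' t).sub_const ((k : ℝ) * Δ)).pow (2 * k + 2)).const_mul
    ((-1 : ℝ) ^ (k + 1) / ((2 * k + 2).factorial : ℝ))).congr_deriv ?_
  rw [hfac]
  field_simp
  push_cast
  ring

end DelayPolynomials

theorem nonneg_of_mem_Icc_natCast_mul {Δ x : ℝ} {n : ℕ} (hx : x ∈ Icc (n * Δ) ((n + 1) * Δ)) :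
    0 ≤ x := by
  have hΔ : 0 ≤ Δ := by nlinarith [hx.1, hx.2]
  exact le_trans (by positivity) hx.1

section IsDelayCosine

variable {Δ : ℝ} {r : ℝ → ℝ}

theorem IsDelayCosine.continuous (hr : IsDelayCosine Δ r) : Continuous r := by
  refine continuous_iff_continuousAt.2 fun t => ?_
  rcases le_or_gt 0 t with ht | ht
  · exact (hr.2.1 t ht).continuousAt
  · refine continuousAt_const.congr (?_ : (fun _ => (1 : ℝ)) =ᶠ[nhds t] r)
    filter_upwards [Iio_mem_nhds ht] with s hs
    exact (hr.1 s hs.le).symm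

theorem IsDelayCosine.exists_hasDerivAt_eqOn_deriv (hr : IsDelayCosine Δ r) :
    ∃ F : ℝ → ℝ, (∀ t, HasDerivAt F (-r (t - Δ)) t) ∧ EqOn (deriv r) F (Ici 0) :=
  ⟨fun t => -∫ u in (0 : ℝ)..t, r (u - Δ),
    fun t => ((hr.continuous.comp (continuous_sub_right Δ)).integral_hasStrictDerivAt 0 t
      |>.hasDerivAt).neg,
    fun t ht => hr.2.2 t ht⟩

theorem IsDelayCosine.continuousOn_deriv (hr : IsDelayCosine Δ r) :
    ContinuousOn (deriv r) (Ici 0) := by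
  obtain ⟨F, hF, hFr⟩ := hr.exists_hasDerivAt_eqOn_deriv
  exact (continuous_iff_continuousAt.2 fun t => (hF t).continuousAt).continuousOn.congr hFr

theorem IsDelayCosine.hasDerivWithinAt_deriv (hr : IsDelayCosine Δ r) {t : ℝ} (ht : 0 ≤ t) :
    HasDerivWithinAt (deriv r) (-r (t - Δ)) (Ici t) t := by
  obtain ⟨F, hF, hFr⟩ := hr.exists_hasDerivAt_eqOn_deriv
  exact (hF t).hasDerivWithinAt.congr (fun s hs => hFr (ht.trans hs)) (hFr ht)

theorem IsDelayCosine.deriv_eqOn_neg_delaySinPoly (hr : IsDelayCosine Δ r) {n : ℕ}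
    (hprev : EqOn r (delayCosPoly Δ n) (Icc ((n - 1) * Δ) (n * Δ)))
    (hd : deriv r (n * Δ) = -delaySinPoly Δ n (n * Δ)) :
    EqOn (deriv r) (fun t => -delaySinPoly Δ n t) (Icc (n * Δ) ((n + 1) * Δ)) := by
  refine fun t ht => eq_of_has_deriv_right_eq (f := deriv r) (g := fun t => -delaySinPoly Δ n t)
    (f' := fun x => -r (x - Δ)) ?_ ?_ ?_ ?_ hd t ht
  · exact fun x hx =>
      hr.hasDerivWithinAt_deriv (nonneg_of_mem_Icc_natCast_mul (Ico_subset_Icc_self hx))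
  · intro x hx
    rw [hprev ⟨by linarith [hx.1], by linarith [hx.2]⟩]
    exact (hasDerivAt_delaySinPoly Δ n x).neg.hasDerivWithinAt
  · exact hr.continuousOn_deriv.mono fun x hx => nonneg_of_mem_Icc_natCast_mul hx
  · exact (Differentiable.continuous fun x =>
      (hasDerivAt_delaySinPoly Δ n x).differentiableAt).neg.continuousOn

theorem IsDelayCosine.eqOn_delayCosPoly_succ (hr : IsDelayCosine Δ r) {n : ℕ}
    (hd : EqOn (deriv r) (fun t => -delaySinPoly Δ n t) (Icc (n * Δ) ((n + 1) * Δ)))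
    (h0 : r (n * Δ) = delayCosPoly Δ n (n * Δ)) :
    EqOn r (delayCosPoly Δ (n + 1)) (Icc (n * Δ) ((n + 1) * Δ)) := by
  refine fun t ht => eq_of_has_deriv_right_eq (f' := fun x => -delaySinPoly Δ n x) ?_ ?_
    hr.continuous.continuousOn ?_ ?_ t ht
  · exact fun x hx => (hr.2.1 x (nonneg_of_mem_Icc_natCast_mul (Ico_subset_Icc_self hx))
      |>.hasDerivWithinAt.congr_deriv (hd (Ico_subset_Icc_self hx)))
  · exact fun x _ => (hasDerivAt_delayCosPoly_succ Δ n x).hasDerivWithinAt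
  · exact (Differentiable.continuous fun x =>
      (hasDerivAt_delayCosPoly_succ Δ n x).differentiableAt).continuousOn
  · rw [h0, delayCosPoly_succ_natCast_mul]

theorem IsDelayCosine.eqOn_delayCosPoly (hr : IsDelayCosine Δ r) (hΔ : 0 ≤ Δ) (n : ℕ) :
    EqOn r (delayCosPoly Δ n) (Icc ((n - 1) * Δ) (n * Δ)) ∧
      deriv r (n * Δ) = -delaySinPoly Δ n (n * Δ) := by
  induction n with
  | zero =>
    refine ⟨fun t ht => ?_, ?_⟩
    · rw [hr.1 t (by simpa using ht.2), delayCosPoly_zero]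
    · simp [hr.2.2 0 le_rfl, delaySinPoly]
  | succ n ih =>
    have hS := hr.deriv_eqOn_neg_delaySinPoly ih.1 ih.2
    have hC := hr.eqOn_delayCosPoly_succ hS (ih.1 ⟨by linarith, le_rfl⟩)
    have hend : ((n + 1 : ℕ) : ℝ) * Δ ∈ Icc (n * Δ) ((n + 1) * Δ) := by
      push_cast; exact ⟨by linarith, le_rfl⟩
    refine ⟨by push_cast; rwa [add_sub_cancel_right], ?_⟩
    rw [hS hend]
    push_cast
    rw [delaySinPoly_succ_natCast_mul]

end IsDelayCosine

/-- explicit piecewise-polynomial formula for `r_Δ`, `Δ > 0`. -/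
theorem rDelta_explicit_formula (Δ : ℝ) (hΔ : 0 < Δ) (r : ℝ → ℝ)
    (hr : IsDelayCosine Δ r) :
    (∀ t ∈ Set.Icc (0:ℝ) Δ, r t = 1 - t ^ 2 / 2) ∧
    (∀ t ∈ Set.Icc Δ (2 * Δ), r t = 1 - t ^ 2 / 2 + (t - Δ) ^ 4 / 24) ∧
    (∀ n : ℕ, 1 ≤ n → ∀ t ∈ Set.Icc (((n : ℝ) - 1) * Δ) ((n : ℝ) * Δ),
      r t = ∑ k ∈ Finset.range (n + 1),
        ((-1 : ℝ) ^ k / (Nat.factorial (2 * k) : ℝ)) * (t - ((k : ℝ) - 1) * Δ) ^ (2 * k)) := by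
  have hpoly (n : ℕ) := (hr.eqOn_delayCosPoly hΔ.le n).1
  refine ⟨fun t ht => ?_, fun t ht => ?_, fun n _ t ht => hpoly n ht⟩
  · rw [hpoly 1 (by norm_num [ht.1, ht.2])]
    simp only [delayCosPoly, Finset.sum_range_succ, Finset.sum_range_zero, Nat.factorial]
    push_cast
    ring
  · rw [hpoly 2 (by norm_num [ht.1, ht.2])]
    simp only [delayCosPoly, Finset.sum_range_succ, Finset.sum_range_zero, Nat.factorial]
    push_cast
    ring
end

section
/- For every Δ ≥ 0, the function r_Δ has a first zero θ_Δ ∈ (0,∞), r_Δ is strictly decreasing on [0, θ_Δ], and θ_Δ ≥ √2. -/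
open MeasureTheory Set Filter

/-!
As long as `r` stays positive on `[0, T)`, the delayed term `r (t - Δ)` is positive for `t < T`,
so `r' < 0` and `r` decreases from `r 0 = 1`. Hence `0 ≤ r (t - Δ) ≤ 1` there, which gives
`r' ≥ -t` and `r T ≥ 1 - T ^ 2 / 2`; at the first zero this is `θ ≥ √2`. Conversely, for
`0 ≤ a ≤ t` the delayed term is at least `r a` on `[0, a]`, so `r' (t) ≤ -a r a`; with `a = 1`
this forces `r 3 ≤ -r 1`, so `r` cannot stay positive on `[0, 3]`.
-/

theorem exists_isFirstZero_of_continuous {f : ℝ → ℝ} (hf : Continuous f) (h0 : 0 < f 0)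
    {t₀ : ℝ} (ht₀ : 0 ≤ t₀) (hft₀ : f t₀ ≤ 0) : ∃ θ, IsFirstZero f θ := by
  set S := Ici (0 : ℝ) ∩ f ⁻¹' Iic 0
  have hSbdd : BddBelow S := ⟨0, fun _ ht => ht.1⟩
  have hθS : sInf S ∈ S :=
    (isClosed_Ici.inter (isClosed_Iic.preimage hf)).csInf_mem ⟨t₀, ht₀, hft₀⟩ hSbdd
  have hθ_le : ∀ t ∈ S, sInf S ≤ t := fun t ht => csInf_le hSbdd ht
  have hθ_pos : 0 < sInf S := hθS.1.lt_of_ne fun h => (not_le.2 h0) (h ▸ hθS.2)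
  refine ⟨sInf S, hθ_pos, ?_, fun t ht0 htθ =>
    not_le.1 fun ht => (hθ_le t ⟨ht0, ht⟩).not_gt htθ⟩
  obtain ⟨c, hc, hfc⟩ := intermediate_value_Icc' hθ_pos.le hf.continuousOn ⟨hθS.2, h0.le⟩
  rwa [le_antisymm hc.2 (hθ_le c ⟨hc.1, hfc.le⟩)] at hfc

namespace IsDelayCosine

variable {Δ T : ℝ} {r : ℝ → ℝ}

theorem continuous_s3 (hr : IsDelayCosine Δ r) : Continuous r := by
  refine continuous_iff_continuousAt.2 fun t => ?_
  rcases lt_or_ge t 0 with ht | ht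
  · refine (continuousAt_const (y := (1 : ℝ))).congr (EventuallyEq.symm ?_)
    filter_upwards [Iio_mem_nhds ht] with s hs using hr.1 s hs.le
  · exact (hr.2.1 t ht).continuousAt

theorem hasDerivAt (hr : IsDelayCosine Δ r) {t : ℝ} (ht : 0 ≤ t) :
    HasDerivAt r (-∫ u in (0 : ℝ)..t, r (u - Δ)) t :=
  hr.2.2 t ht ▸ hr.2.1 t ht

theorem intervalIntegrable_comp_sub (hr : IsDelayCosine Δ r) (a b : ℝ) :
    IntervalIntegrable (fun u => r (u - Δ)) volume a b :=
  (hr.continuous_s3.comp (continuous_sub_right Δ)).intervalIntegrable a b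

theorem pos_of_lt (hr : IsDelayCosine Δ r) (hpos : ∀ t, 0 ≤ t → t < T → 0 < r t) {s : ℝ}
    (hs : s < T) : 0 < r s := by
  rcases le_or_gt s 0 with h | h
  · rw [hr.1 s h]
    exact one_pos
  · exact hpos s h.le hs

theorem strictAntiOn_Icc (hr : IsDelayCosine Δ r) (hΔ : 0 ≤ Δ) (hpos : ∀ s < T, 0 < r s) :
    StrictAntiOn r (Icc 0 T) := by
  refine strictAntiOn_of_hasDerivWithinAt_neg (convex_Icc 0 T)
    (f' := fun t => -∫ u in (0 : ℝ)..t, r (u - Δ)) hr.continuous_s3.continuousOn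
    (fun t ht => ?_) fun t ht => ?_ <;> rw [interior_Icc] at ht
  · exact (hr.hasDerivAt ht.1.le).hasDerivWithinAt
  exact neg_neg_of_pos (intervalIntegral.intervalIntegral_pos_of_pos_on
    (hr.intervalIntegrable_comp_sub 0 t) (fun u hu => hpos _ (by linarith [hu.2, ht.2])) ht.1)

theorem antitoneOn_Iic (hr : IsDelayCosine Δ r) (hΔ : 0 ≤ Δ) (hpos : ∀ s < T, 0 < r s) :
    AntitoneOn r (Iic T) := by
  intro s _ a (ha : a ≤ T) hsa
  have hanti := (hr.strictAntiOn_Icc hΔ hpos).antitoneOn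
  rcases le_or_gt a 0 with ha0 | ha0
  · rw [hr.1 a ha0, hr.1 s (hsa.trans ha0)]
  rcases le_or_gt s 0 with hs0 | hs0
  · rw [hr.1 s hs0, ← hr.1 0 le_rfl]
    exact hanti ⟨le_rfl, ha0.le.trans ha⟩ ⟨ha0.le, ha⟩ ha0.le
  · exact hanti ⟨hs0.le, hsa.trans ha⟩ ⟨ha0.le, ha⟩ hsa

theorem le_one (hr : IsDelayCosine Δ r) (hΔ : 0 ≤ Δ) (hpos : ∀ s < T, 0 < r s) {s : ℝ}
    (hs : s ≤ T) : r s ≤ 1 :=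
  hr.1 (min s 0) (min_le_right s 0) ▸
    hr.antitoneOn_Iic hΔ hpos ((min_le_left s 0).trans hs) hs (min_le_left s 0)

theorem one_sub_sq_div_two_le (hr : IsDelayCosine Δ r) (hΔ : 0 ≤ Δ) (hpos : ∀ s < T, 0 < r s)
    (hT : 0 ≤ T) : 1 - T ^ 2 / 2 ≤ r T := by
  have hmono : MonotoneOn (fun t => r t + t ^ 2 / 2) (Icc 0 T) := by
    refine monotoneOn_of_hasDerivWithinAt_nonneg (convex_Icc 0 T)
      (f' := fun t => (-∫ u in (0 : ℝ)..t, r (u - Δ)) + t)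
      (hr.continuous_s3.add (by fun_prop)).continuousOn (fun t ht => ?_) fun t ht => ?_
    · rw [interior_Icc] at ht
      exact ((hr.hasDerivAt ht.1.le).add ((hasDerivAt_pow 2 t).div_const 2)
        |>.congr_deriv (by ring)).hasDerivWithinAt
    · rw [interior_Icc] at ht
      have hint : ∫ u in (0 : ℝ)..t, r (u - Δ) ≤ ∫ _ in (0 : ℝ)..t, (1 : ℝ) :=
        intervalIntegral.integral_mono_on ht.1.le (hr.intervalIntegrable_comp_sub 0 t)
          intervalIntegrable_const fun u hu => hr.le_one hΔ hpos (by linarith [hu.2, ht.2])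
      simp only [intervalIntegral.integral_const, sub_zero, smul_eq_mul, mul_one] at hint
      linarith
  have := hmono ⟨le_rfl, hT⟩ ⟨hT, le_rfl⟩ hT
  simp only [hr.1 0 le_rfl] at this
  linarith

theorem le_mul_one_sub (hr : IsDelayCosine Δ r) (hΔ : 0 ≤ Δ) (hpos : ∀ s < T, 0 < r s)
    {a : ℝ} (ha : 0 ≤ a) (haT : a ≤ T) : r T ≤ r a * (1 - a * (T - a)) := by
  have hanti : AntitoneOn (fun t => r t + a * r a * t) (Icc a T) := by
    refine antitoneOn_of_hasDerivWithinAt_nonpos (convex_Icc a T)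
      (f' := fun t => (-∫ u in (0 : ℝ)..t, r (u - Δ)) + a * r a)
      (hr.continuous_s3.add (by fun_prop)).continuousOn (fun t ht => ?_) fun t ht => ?_
    · rw [interior_Icc] at ht
      exact ((hr.hasDerivAt (ha.trans ht.1.le)).add ((hasDerivAt_id t).const_mul _)
        |>.congr_deriv (by simp)).hasDerivWithinAt
    · rw [interior_Icc] at ht
      have hhead : a * r a ≤ ∫ u in (0 : ℝ)..a, r (u - Δ) := by
        simpa using intervalIntegral.integral_mono_on ha intervalIntegrable_const
          (hr.intervalIntegrable_comp_sub 0 a) fun u hu =>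
            hr.antitoneOn_Iic hΔ hpos (by simp; linarith [hu.2]) (by simpa using haT)
              (by linarith [hu.2])
      have htail : 0 ≤ ∫ u in a..t, r (u - Δ) :=
        intervalIntegral.integral_nonneg ht.1.le fun u hu =>
          (hpos _ (by linarith [hu.2, ht.2])).le
      rw [← intervalIntegral.integral_add_adjacent_intervals
        (hr.intervalIntegrable_comp_sub 0 a) (hr.intervalIntegrable_comp_sub a t)]
      linarith
  have := hanti ⟨le_rfl, haT⟩ ⟨haT, le_rfl⟩ haT
  simp only at this
  linarith

theorem exists_nonpos (hr : IsDelayCosine Δ r) (hΔ : 0 ≤ Δ) : ∃ t, 0 ≤ t ∧ r t ≤ 0 := by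
  by_contra! hpos
  have h31 : r 3 ≤ r 1 * (1 - 1 * (3 - 1)) :=
    hr.le_mul_one_sub hΔ (fun s => hr.pos_of_lt fun t ht _ => hpos t ht) zero_le_one
      (by norm_num)
  linarith [hpos 3 (by norm_num), hpos 1 zero_le_one]

end IsDelayCosine

/-- `r_Δ` has a first zero `θ_Δ ∈ (0,∞)`, is strictly decreasing on
`[0, θ_Δ]`, and `θ_Δ ≥ √2`. -/
theorem rDelta_first_zero (Δ : ℝ) (hΔ : 0 ≤ Δ) (r : ℝ → ℝ)
    (hr : IsDelayCosine Δ r) :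
    ∃ θ : ℝ, IsFirstZero r θ ∧ StrictAntiOn r (Set.Icc 0 θ) ∧ Real.sqrt 2 ≤ θ := by
  obtain ⟨t₀, ht₀, hrt₀⟩ := hr.exists_nonpos hΔ
  have hr0 : 0 < r 0 := hr.1 0 le_rfl ▸ one_pos
  obtain ⟨θ, hθ⟩ := exists_isFirstZero_of_continuous hr.continuous_s3 hr0 ht₀ hrt₀
  have hpos : ∀ s < θ, 0 < r s := fun _ => hr.pos_of_lt hθ.2.2
  have hθ_sq : 1 - θ ^ 2 / 2 ≤ 0 := hθ.2.1 ▸ hr.one_sub_sq_div_two_le hΔ hpos hθ.1.le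
  exact ⟨θ, hθ, hr.strictAntiOn_Icc hΔ hpos, (Real.sqrt_le_left hθ.1.le).2 (by linarith)⟩
end

section
/- Let p, P, τ, T be Lebesgue measurable and uniformly essentially bounded with 0 ≤ τ(t) ≤ T(t) and |p(t)| ≤ P(t) for t ≥ 0; set τ_m := esssup_{t≥0} τ(t) and T_m := esssup_{t≥0} T(t). Suppose y solves y''(t) + P(t)·y(t − T(t)) = 0 for almost every t ∈ [0,∞), y(t) > 0 for all t ∈ [−T_m, b) for some b > 0, and y'(t) ≤ 0 for all t ∈ [−T_m, 0]. Suppose z solves z''(t) + p(t)·z(t − τ(t)) = 0 for almost every t ∈ [0,∞) and satisfies |z(t)| ≤ y(t) for all t ∈ [−τ_m, 0] and |z(b)| = y(b). Then |z(t)| ≤ y(t) for all t ∈ [0, b]. -/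
open MeasureTheory Set Filter

set_option maxHeartbeats 2000000 in
/-- the backward comparison theorem (Theorem 3.37). -/
theorem backward_comparison
    (p P τ T z y : ℝ → ℝ) (b : ℝ)
    (hpm : Measurable p) (hPm : Measurable P) (hτm : Measurable τ) (hTm : Measurable T)
    (hpb : ∃ M, ∀ᵐ t ∂(volume : Measure ℝ), |p t| ≤ M)
    (hPb : ∃ M, ∀ᵐ t ∂(volume : Measure ℝ), |P t| ≤ M)
    (hτb : ∃ M, ∀ᵐ t ∂(volume : Measure ℝ), |τ t| ≤ M)
    (hTb : ∃ M, ∀ᵐ t ∂(volume : Measure ℝ), |T t| ≤ M)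
    (hτT : ∀ t, 0 ≤ t → 0 ≤ τ t ∧ τ t ≤ T t)
    (hpP : ∀ t, 0 ≤ t → |p t| ≤ P t)
    (τm Tm : ℝ)
    (hτsup : τm = essSup τ (volume.restrict (Set.Ici (0:ℝ))))
    (hTsup : Tm = essSup T (volume.restrict (Set.Ici (0:ℝ))))
    (hb : 0 < b)
    (hy : SolvesDDE P T y (Set.Ici (0:ℝ)))
    (hypos : ∀ t ∈ Set.Ico (-Tm) b, 0 < y t)
    (hysmooth : ∀ t ∈ Set.Icc (-Tm) (0:ℝ), HasDerivAt y (deriv y t) t)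
    (hy' : ∀ t ∈ Set.Icc (-Tm) (0:ℝ), deriv y t ≤ 0)
    (hz : SolvesDDE p τ z (Set.Ici (0:ℝ)))
    (hinit : ∀ t ∈ Set.Icc (-τm) (0:ℝ), |z t| ≤ y t)
    (hzb : |z b| = y b) :
    ∀ t ∈ Set.Icc (0:ℝ) b, |z t| ≤ y t := by
  classical
  obtain ⟨Mp, hMp⟩ := hpb
  obtain ⟨MP, hMP⟩ := hPb
  obtain ⟨Mτ, hMτ⟩ := hτb
  obtain ⟨MT, hMT⟩ := hTb
  set μ0 : Measure ℝ := volume.restrict (Set.Ici (0:ℝ)) with hμ0def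
  have hμ0ne : μ0 ≠ 0 := by
    intro h
    have h1 : μ0 (Set.Ici (0:ℝ)) = 0 := by rw [h]; simp
    rw [hμ0def, Measure.restrict_apply_self, Real.volume_Ici] at h1
    simp at h1
  haveI : (ae μ0).NeBot := ae_neBot.2 hμ0ne
  have hτbdd : IsBoundedUnder (· ≤ ·) (ae μ0) τ :=
    ⟨Mτ, eventually_map.2 ((ae_restrict_of_ae hMτ).mono fun u hu => le_of_abs_le hu)⟩
  have hTbdd : IsBoundedUnder (· ≤ ·) (ae μ0) T :=
    ⟨MT, eventually_map.2 ((ae_restrict_of_ae hMT).mono fun u hu => le_of_abs_le hu)⟩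
  have hmem0 : ∀ᵐ u ∂μ0, u ∈ Set.Ici (0:ℝ) := ae_restrict_mem measurableSet_Ici
  have hτ0ae : ∀ᵐ u ∂μ0, 0 ≤ τ u := hmem0.mono fun u hu => (hτT u hu).1
  have hτTae : ∀ᵐ u ∂μ0, τ u ≤ T u := hmem0.mono fun u hu => (hτT u hu).2
  have hτle : ∀ᵐ u ∂μ0, τ u ≤ τm := by rw [hτsup]; exact ae_le_essSup hτbdd
  have hTle : ∀ᵐ u ∂μ0, T u ≤ Tm := by rw [hTsup]; exact ae_le_essSup hTbdd
  have hτm0 : 0 ≤ τm := by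
    rw [hτsup]; exact le_limsup_of_frequently_le hτ0ae.frequently hτbdd
  have hτmTm : τm ≤ Tm := by
    rw [hτsup, hTsup]
    refine limsup_le_limsup hτTae ?_ hTbdd
    exact IsBoundedUnder.isCoboundedUnder_le
      ⟨-Mτ, eventually_map.2 ((ae_restrict_of_ae hMτ).mono fun u hu => neg_le_of_abs_le hu)⟩
  have hTm0 : 0 ≤ Tm := hτm0.trans hτmTm
  -- continuity of y on [-Tm, ∞)
  have hycontAt : ∀ v : ℝ, -Tm ≤ v → ContinuousAt y v := by
    intro v hv
    rcases le_total v 0 with h | h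
    · exact (hysmooth v ⟨hv, h⟩).continuousAt
    · exact (hy.1 v (Set.mem_Ici.mpr h)).continuousAt
  have hyb0 : 0 ≤ y b := hzb ▸ abs_nonneg (z b)
  have hynn : ∀ v ∈ Set.Icc (-Tm) b, 0 ≤ y v := by
    intro v hv
    rcases lt_or_eq_of_le hv.2 with h | h
    · exact (hypos v ⟨hv.1, h⟩).le
    · rw [h]; exact hyb0
  have hy0pos : 0 < y 0 := hypos 0 ⟨neg_nonpos.2 hTm0, hb⟩
  -- master a.e. facts on [0,b]
  have hresle : volume.restrict (Set.Icc (0:ℝ) b) ≤ μ0 := by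
    rw [hμ0def]; exact Measure.restrict_mono (fun x hx => hx.1) le_rfl
  have hmaster : ∀ᵐ u ∂(volume.restrict (Set.Icc (0:ℝ) b)), τ u ≤ τm ∧ T u ≤ Tm := by
    filter_upwards [hτle.filter_mono (ae_mono hresle), hTle.filter_mono (ae_mono hresle)]
      with u h1 h2
    exact ⟨h1, h2⟩
  have hmasterG : ∀ᵐ u ∂(volume : Measure ℝ), u ∈ Set.Icc (0:ℝ) b → (τ u ≤ τm ∧ T u ≤ Tm) :=
    (ae_restrict_iff' measurableSet_Icc).1 hmaster
  have hPnn : ∀ u : ℝ, 0 ≤ u → 0 ≤ P u := fun u hu => (abs_nonneg (p u)).trans (hpP u hu)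
  have hTnn : ∀ u : ℝ, 0 ≤ u → 0 ≤ T u := fun u hu => (hτT u hu).1.trans (hτT u hu).2
  have hgnn : ∀ s t : ℝ, 0 ≤ s → t ≤ b →
      (0:ℝ → ℝ) ≤ᵐ[volume.restrict (Set.Icc s t)] fun u => P u * y (u - T u) := by
    intro s t hs ht
    have hsub : Set.Icc s t ⊆ Set.Icc 0 b := Set.Icc_subset_Icc hs ht
    filter_upwards [hmaster.filter_mono (ae_mono (Measure.restrict_mono hsub le_rfl)),
      ae_restrict_mem measurableSet_Icc] with u hu humem
    have hu0 : 0 ≤ u := hs.trans humem.1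
    have hub : u ≤ b := humem.2.trans ht
    refine mul_nonneg (hPnn u hu0) (hynn _ ⟨?_, ?_⟩)
    · linarith [hu.2]
    · have := hTnn u hu0; linarith
  have hderivyAnti : AntitoneOn (deriv y) (Set.Icc (0:ℝ) b) := by
    intro s hs t ht hst
    rw [hy.2 s (Set.mem_Ici.mpr hs.1) t (Set.mem_Ici.mpr ht.1)]
    have h0 : 0 ≤ ∫ u in s..t, P u * y (u - T u) :=
      intervalIntegral.integral_nonneg_of_ae_restrict hst (hgnn s t hs.1 ht.2)
    linarith
  have hderivy0 : ∀ t ∈ Set.Icc (0:ℝ) b, deriv y t ≤ 0 := by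
    intro t ht
    have h1 : deriv y t ≤ deriv y 0 := hderivyAnti ⟨le_rfl, hb.le⟩ ht ht.1
    exact h1.trans (hy' 0 ⟨neg_nonpos.2 hTm0, le_rfl⟩)
  have hyAnti : AntitoneOn y (Set.Icc (-Tm) b) := by
    apply antitoneOn_of_deriv_nonpos (convex_Icc _ _)
    · exact fun v hv => (hycontAt v hv.1).continuousWithinAt
    · intro v hv
      rw [interior_Icc] at hv
      rcases le_total v 0 with h | h
      · exact (hysmooth v ⟨hv.1.le, h⟩).differentiableAt.differentiableWithinAt
      · exact (hy.1 v (Set.mem_Ici.mpr h)).differentiableAt.differentiableWithinAt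
    · intro v hv
      rw [interior_Icc] at hv
      rcases le_total v 0 with h | h
      · exact hy' v ⟨hv.1.le, h⟩
      · exact hderivy0 v ⟨h, hv.2.le⟩
  have hzcont : ∀ v : ℝ, 0 ≤ v → ContinuousAt z v :=
    fun v hv => (hz.1 v (Set.mem_Ici.mpr hv)).continuousAt
  have hyconc : ConcaveOn ℝ (Set.Icc (0:ℝ) b) y := by
    apply AntitoneOn.concaveOn_of_deriv (convex_Icc _ _)
    · exact fun v hv => (hycontAt v (by linarith [hv.1] : -Tm ≤ v)).continuousWithinAt
    · intro v hv; rw [interior_Icc] at hv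
      exact (hy.1 v (Set.mem_Ici.mpr hv.1.le)).differentiableAt.differentiableWithinAt
    · rw [interior_Icc]
      exact hderivyAnti.mono Set.Ioo_subset_Icc_self
  have hchord : ∀ t ∈ Set.Icc (0:ℝ) b, ((b - t)/b) * y 0 + (t/b) * y b ≤ y t := by
    intro t ht
    have ha : 0 ≤ (b - t)/b := div_nonneg (by linarith [ht.2]) hb.le
    have hc : 0 ≤ t/b := div_nonneg ht.1 hb.le
    have hac : (b - t)/b + t/b = 1 := by field_simp; ring
    have h2 := hyconc.2 (Set.left_mem_Icc.2 hb.le) (Set.right_mem_Icc.2 hb.le) ha hc hac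
    have harg : ((b - t)/b) • (0:ℝ) + (t/b) • b = t := by
      simp only [smul_eq_mul, mul_zero, zero_add]
      field_simp
    rw [harg] at h2
    simpa only [smul_eq_mul] using h2
  have hzabscont : ContinuousOn (fun v => |z v|) (Set.Icc (0:ℝ) b) :=
    fun v hv => ((hzcont v hv.1).continuousWithinAt).abs
  obtain ⟨tM, htM, htMmax⟩ := isCompact_Icc.exists_isMaxOn (Set.nonempty_Icc.2 hb.le) hzabscont
  set Bz := |z tM| with hBz
  have hBznn : 0 ≤ Bz := abs_nonneg _
  have hzBz : ∀ v ∈ Set.Icc (0:ℝ) b, |z v| ≤ Bz := fun v hv => htMmax hv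
  set Zb := max (y (-τm)) Bz with hZb
  have hZbnn : 0 ≤ Zb := le_trans hBznn (le_max_right _ _)
  have hzZb : ∀ v ∈ Set.Icc (-τm) b, |z v| ≤ Zb := by
    intro v hv
    rcases le_total v 0 with h | h
    · refine le_trans (hinit v ⟨hv.1, h⟩) (le_trans ?_ (le_max_left _ _))
      exact hyAnti ⟨by linarith, by linarith⟩ ⟨by linarith [hv.1], hv.2⟩ hv.1
    · exact le_trans (hzBz v ⟨h, hv.2⟩) (le_max_right _ _)
  -- interval integrability of the majorant integrand
  have hytilde : Continuous fun x : ℝ => y (max x (-Tm)) := by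
    have hmaxcont : Continuous fun x : ℝ => max x (-Tm) := continuous_id.max continuous_const
    rw [continuous_iff_continuousAt]
    intro x
    exact ContinuousAt.comp (g := y) (hycontAt _ (le_max_right _ _)) hmaxcont.continuousAt
  have hgint : ∀ s t : ℝ, s ∈ Set.Icc (0:ℝ) b → t ∈ Set.Icc (0:ℝ) b →
      IntervalIntegrable (fun u => P u * y (u - T u)) volume s t := by
    intro s t hs ht
    have hsub : Set.uIoc s t ⊆ Set.Icc 0 b :=
      Set.uIoc_subset_uIcc.trans (Set.uIcc_subset_Icc hs ht)
    have hae : ∀ᵐ u ∂volume.restrict (Set.uIoc s t),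
        (τ u ≤ τm ∧ T u ≤ Tm) ∧ |P u| ≤ MP ∧ u ∈ Set.Icc (0:ℝ) b := by
      filter_upwards [hmaster.filter_mono (ae_mono (Measure.restrict_mono hsub le_rfl)),
        ae_restrict_of_ae hMP, ae_restrict_mem measurableSet_uIoc] with u h1 h2 h3
      exact ⟨h1, h2, hsub h3⟩
    rw [intervalIntegrable_iff]
    refine Integrable.mono' (g := fun _ => MP * y (-Tm))
      ((intervalIntegrable_const (c := MP * y (-Tm))).def') ?_ ?_
    · have hm2 : Measurable fun u : ℝ => P u * y (max (u - T u) (-Tm)) :=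
        hPm.mul (hytilde.measurable.comp (measurable_id.sub hTm))
      refine hm2.aestronglyMeasurable.congr ?_
      filter_upwards [hae] with u hu
      have h1 : -Tm ≤ u - T u := by
        have := hu.1.2; have := hu.2.2.1; linarith
      rw [max_eq_left h1]
    · filter_upwards [hae] with u hu
      obtain ⟨⟨hτu, hTu⟩, hPu, humem⟩ := hu
      have h0u : 0 ≤ u := humem.1
      have hmemT : u - T u ∈ Set.Icc (-Tm) b :=
        ⟨by linarith, by linarith [hTnn u h0u, humem.2]⟩
      have hyle : y (u - T u) ≤ y (-Tm) :=
        hyAnti ⟨le_rfl, by linarith⟩ hmemT hmemT.1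
      have hyabs : |y (u - T u)| = y (u - T u) := abs_of_nonneg (hynn _ hmemT)
      rw [Real.norm_eq_abs, abs_mul, hyabs]
      exact mul_le_mul hPu hyle (hynn _ hmemT) (le_trans (abs_nonneg _) hPu)
  -- main contradiction argument
  by_contra hcon
  push_neg at hcon
  obtain ⟨t₁, ht₁, hv₁⟩ := hcon
  have ht₁b : t₁ < b := by
    rcases lt_or_eq_of_le ht₁.2 with h | h
    · exact h
    · exfalso; rw [h, hzb] at hv₁; exact lt_irrefl _ hv₁
  have hy₁pos : 0 < y t₁ := hypos t₁ ⟨by linarith [ht₁.1], ht₁b⟩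
  set S : Set ℝ := {l : ℝ | 0 ≤ l ∧ ∀ v ∈ Set.Icc (0:ℝ) b, |z v| ≤ l * y v} with hSdef
  have hSbdd : BddBelow S := ⟨0, fun l hl => hl.1⟩
  have hSne : S.Nonempty := by
    rcases hyb0.eq_or_lt' with hyb | hyb
    · -- y b = 0
      have hzb0 : z b = 0 := abs_eq_zero.1 (by rw [hzb, hyb])
      set C0 := max Mp 0 * Zb with hC0
      have hC0nn : 0 ≤ C0 := mul_nonneg (le_max_right _ _) hZbnn
      have hKz : ∀ v ∈ Set.Icc (0:ℝ) b, ‖deriv z v‖ ≤ |deriv z b| + C0 * b := by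
        intro v hv
        rw [hz.2 b (Set.mem_Ici.mpr hb.le) v (Set.mem_Ici.mpr hv.1)]
        have hsub : Set.uIoc b v ⊆ Set.Icc 0 b :=
          Set.uIoc_subset_uIcc.trans (Set.uIcc_subset_Icc ⟨hb.le, le_rfl⟩ hv)
        have hbnd : ∀ᵐ u ∂(volume : Measure ℝ), u ∈ Set.uIoc b v →
            ‖p u * z (u - τ u)‖ ≤ C0 := by
          filter_upwards [hMp, hmasterG] with u h1 h2 hu
          have humem := hsub hu
          obtain ⟨hτum, hTum⟩ := h2 humem
          have h0u : 0 ≤ u := humem.1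
          have hzmem : u - τ u ∈ Set.Icc (-τm) b :=
            ⟨by linarith, by linarith [(hτT u h0u).1, humem.2]⟩
          rw [Real.norm_eq_abs, abs_mul]
          exact mul_le_mul (h1.trans (le_max_left _ _)) (hzZb _ hzmem) (abs_nonneg _)
            (le_max_right _ _)
        calc ‖deriv z b - ∫ u in b..v, p u * z (u - τ u)‖
            ≤ ‖deriv z b‖ + ‖∫ u in b..v, p u * z (u - τ u)‖ := norm_sub_le _ _
          _ ≤ |deriv z b| + C0 * |v - b| := by
              rw [Real.norm_eq_abs]
              exact add_le_add le_rfl (intervalIntegral.norm_integral_le_of_norm_le_const_ae hbnd)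
          _ ≤ |deriv z b| + C0 * b := by
              have h3 : |v - b| ≤ b := by
                rw [abs_sub_comm, abs_of_nonneg (by linarith [hv.2] : (0:ℝ) ≤ b - v)]
                linarith [hv.1]
              have := mul_le_mul_of_nonneg_left h3 hC0nn
              linarith
      set K := |deriv z b| + C0 * b with hK
      have hKnn : 0 ≤ K := add_nonneg (abs_nonneg _) (mul_nonneg hC0nn hb.le)
      have hzlin : ∀ v ∈ Set.Icc (0:ℝ) b, |z v| ≤ K * (b - v) := by
        intro v hv
        have hlip := Convex.norm_image_sub_le_of_norm_hasDerivWithin_le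
          (f := z) (f' := deriv z) (s := Set.Icc (0:ℝ) b)
          (fun x hx => (hz.1 x (Set.mem_Ici.mpr hx.1)).hasDerivWithinAt) hKz (convex_Icc _ _)
          (Set.right_mem_Icc.2 hb.le) hv
        rw [hzb0, sub_zero, Real.norm_eq_abs, Real.norm_eq_abs] at hlip
        calc |z v| ≤ K * |v - b| := hlip
          _ = K * (b - v) := by
              rw [abs_sub_comm, abs_of_nonneg (by linarith [hv.2] : (0:ℝ) ≤ b - v)]
      refine ⟨max 1 (K * b / y 0), le_trans zero_le_one (le_max_left _ _), ?_⟩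
      intro v hv
      have hlow : y 0 / b * (b - v) ≤ y v := by
        have h2 := hchord v hv
        rw [hyb] at h2
        have : y 0 / b * (b - v) = ((b - v)/b) * y 0 := by ring
        rw [this]
        linarith [h2]
      calc |z v| ≤ K * (b - v) := hzlin v hv
        _ = (K * b / y 0) * (y 0 / b * (b - v)) := by field_simp
        _ ≤ (K * b / y 0) * y v := by
            refine mul_le_mul_of_nonneg_left hlow ?_
            positivity
        _ ≤ max 1 (K * b / y 0) * y v :=
            mul_le_mul_of_nonneg_right (le_max_right _ _) (hynn v ⟨by linarith [hv.1], hv.2⟩)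
    · -- y b > 0
      refine ⟨max 1 (Bz / y b), le_trans zero_le_one (le_max_left _ _), ?_⟩
      intro v hv
      have hyvb : y b ≤ y v :=
        hyAnti ⟨by linarith [hv.1], hv.2⟩ ⟨by linarith, le_rfl⟩ hv.2
      calc |z v| ≤ Bz := hzBz v hv
        _ = (Bz / y b) * y b := (div_mul_cancel₀ _ hyb.ne').symm
        _ ≤ (Bz / y b) * y v :=
            mul_le_mul_of_nonneg_left hyvb (div_nonneg hBznn hyb.le)
        _ ≤ max 1 (Bz / y b) * y v :=
            mul_le_mul_of_nonneg_right (le_max_right _ _) (hynn v ⟨by linarith [hv.1], hv.2⟩)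
  set lam := sInf S with hlam
  have hlam0 : 0 ≤ lam := le_csInf hSne fun l hl => hl.1
  have hlammem : ∀ v ∈ Set.Icc (0:ℝ) b, |z v| ≤ lam * y v := by
    intro v hv
    rcases (hynn v ⟨by linarith [hv.1], hv.2⟩).lt_or_eq with hyv | hyv
    · have hle : |z v| / y v ≤ lam :=
        le_csInf hSne fun l hl => (div_le_iff₀ hyv).2 (hl.2 v hv)
      calc |z v| = |z v| / y v * y v := (div_mul_cancel₀ _ hyv.ne').symm
        _ ≤ lam * y v := mul_le_mul_of_nonneg_right hle hyv.le
    · obtain ⟨l, hl⟩ := hSne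
      have h2 := hl.2 v hv
      rw [← hyv] at h2 ⊢
      simpa using h2
  have hlam1 : 1 < lam := by
    by_contra hle
    push_neg at hle
    have h1 := hlammem t₁ ht₁
    have h2 : lam * y t₁ ≤ 1 * y t₁ := mul_le_mul_of_nonneg_right hle hy₁pos.le
    rw [one_mul] at h2
    linarith
  have hlamext : ∀ v ∈ Set.Icc (-τm) b, |z v| ≤ lam * y v := by
    intro v hv
    rcases le_total v 0 with h | h
    · have h1 := hinit v ⟨hv.1, h⟩
      have h2 : y v ≤ lam * y v :=
        le_mul_of_one_le_left (hynn v ⟨by linarith [hv.1], hv.2⟩) hlam1.le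
      exact h1.trans h2
    · exact hlammem v ⟨h, hv.2⟩
  have hu'das : ∀ σ : ℝ, ∀ x : ℝ, 0 ≤ x →
      HasDerivAt (fun w => lam * y w - σ * z w) (lam * deriv y x - σ * deriv z x) x :=
    fun σ x hx =>
      ((hy.1 x (Set.mem_Ici.mpr hx)).const_mul lam).sub
        ((hz.1 x (Set.mem_Ici.mpr hx)).const_mul σ)
  have hconcav : ∀ σ : ℝ, |σ| = 1 →
      ConcaveOn ℝ (Set.Icc (0:ℝ) b) (fun w => lam * y w - σ * z w) := by
    intro σ hσ
    apply AntitoneOn.concaveOn_of_deriv (convex_Icc _ _)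
    · exact fun v hv => ((hu'das σ v hv.1).continuousAt).continuousWithinAt
    · intro v hv; rw [interior_Icc] at hv
      exact (hu'das σ v hv.1.le).differentiableAt.differentiableWithinAt
    · rw [interior_Icc]
      intro s hs t ht hst
      rw [(hu'das σ s hs.1.le).deriv, (hu'das σ t ht.1.le).deriv,
        hy.2 s (Set.mem_Ici.mpr hs.1.le) t (Set.mem_Ici.mpr ht.1.le),
        hz.2 s (Set.mem_Ici.mpr hs.1.le) t (Set.mem_Ici.mpr ht.1.le)]
      have key : σ * (∫ u in s..t, p u * z (u - τ u)) ≤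
          lam * ∫ u in s..t, P u * y (u - T u) := by
        by_cases hfi : IntervalIntegrable (fun u => p u * z (u - τ u)) volume s t
        · have hgi := hgint s t ⟨hs.1.le, hs.2.le⟩ ⟨ht.1.le, ht.2.le⟩
          have hnn : (0:ℝ → ℝ) ≤ᵐ[volume.restrict (Set.Icc s t)]
              fun u => lam * (P u * y (u - T u)) - σ * (p u * z (u - τ u)) := by
            have hsub : Set.Icc s t ⊆ Set.Icc 0 b := Set.Icc_subset_Icc hs.1.le ht.2.le
            filter_upwards [hmaster.filter_mono (ae_mono (Measure.restrict_mono hsub le_rfl)),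
              ae_restrict_mem measurableSet_Icc] with u hu humem
            obtain ⟨hτum, hTum⟩ := hu
            have h0u : 0 ≤ u := hs.1.le.trans humem.1
            have hub : u ≤ b := humem.2.trans ht.2.le
            have hτmem : u - τ u ∈ Set.Icc (-τm) b :=
              ⟨by linarith, by linarith [(hτT u h0u).1]⟩
            have hTmem : u - T u ∈ Set.Icc (-Tm) b :=
              ⟨by linarith, by linarith [hTnn u h0u]⟩
            have hτmem' : u - τ u ∈ Set.Icc (-Tm) b := ⟨by linarith, hτmem.2⟩
            have h1 : |z (u - τ u)| ≤ lam * y (u - τ u) := hlamext _ hτmem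
            have h2 : y (u - τ u) ≤ y (u - T u) :=
              hyAnti hTmem hτmem' (by linarith [(hτT u h0u).2])
            have h3 : σ * (p u * z (u - τ u)) ≤ |p u| * |z (u - τ u)| := by
              calc σ * (p u * z (u - τ u)) ≤ |σ * (p u * z (u - τ u))| := le_abs_self _
                _ = |p u| * |z (u - τ u)| := by rw [abs_mul, hσ, one_mul, abs_mul]
            have h4 : |p u| * |z (u - τ u)| ≤ P u * (lam * y (u - τ u)) :=
              mul_le_mul (hpP u h0u) h1 (abs_nonneg _) (hPnn u h0u)
            have h5 : P u * (lam * y (u - τ u)) ≤ P u * (lam * y (u - T u)) :=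
              mul_le_mul_of_nonneg_left (mul_le_mul_of_nonneg_left h2 hlam0) (hPnn u h0u)
            simp only [Pi.zero_apply]
            nlinarith [h3, h4, h5]
          have h0 : 0 ≤ ∫ u in s..t,
              (lam * (P u * y (u - T u)) - σ * (p u * z (u - τ u))) :=
            intervalIntegral.integral_nonneg_of_ae_restrict hst hnn
          rw [intervalIntegral.integral_sub (hgi.const_mul lam) (hfi.const_mul σ),
            intervalIntegral.integral_const_mul, intervalIntegral.integral_const_mul] at h0
          linarith
        · rw [intervalIntegral.integral_undef hfi, mul_zero]
          exact mul_nonneg hlam0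
            (intervalIntegral.integral_nonneg_of_ae_restrict hst (hgnn s t hs.1.le ht.2.le))
      nlinarith [key]
  have hunn : ∀ σ : ℝ, |σ| = 1 → ∀ v ∈ Set.Icc (0:ℝ) b, 0 ≤ lam * y v - σ * z v := by
    intro σ hσ v hv
    have h1 : σ * z v ≤ |z v| := by
      calc σ * z v ≤ |σ * z v| := le_abs_self _
        _ = |z v| := by rw [abs_mul, hσ, one_mul]
    linarith [hlammem v hv]
  have hz0le : |z 0| ≤ y 0 := hinit 0 ⟨neg_nonpos.2 hτm0, le_rfl⟩
  rcases hyb0.eq_or_lt' with hyb | hyb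
  · -- Case y b = 0 : slope argument
    have hzb0 : z b = 0 := abs_eq_zero.1 (by rw [hzb, hyb])
    have hyD : ∀ v ∈ Set.Icc (0:ℝ) b, y v ≤ -(deriv y b) * (b - v) := by
      have hmono : MonotoneOn (fun w => y w - deriv y b * w) (Set.Icc (0:ℝ) b) := by
        apply monotoneOn_of_deriv_nonneg (convex_Icc _ _)
        · intro v hv
          exact (((hy.1 v (Set.mem_Ici.mpr hv.1)).sub
            ((hasDerivAt_id v).const_mul (deriv y b))).continuousAt).continuousWithinAt
        · intro v hv; rw [interior_Icc] at hv
          exact ((hy.1 v (Set.mem_Ici.mpr hv.1.le)).sub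
            ((hasDerivAt_id v).const_mul (deriv y b))).differentiableAt.differentiableWithinAt
        · intro v hv; rw [interior_Icc] at hv
          have hder : HasDerivAt (fun w => y w - deriv y b * w)
              (deriv y v - deriv y b * 1) v :=
            (hy.1 v (Set.mem_Ici.mpr hv.1.le)).sub
              ((hasDerivAt_id v).const_mul (deriv y b))
          rw [hder.deriv, mul_one]
          have := hderivyAnti ⟨hv.1.le, hv.2.le⟩ (Set.right_mem_Icc.2 hb.le) hv.2.le
          linarith
      intro v hv
      have h2 := hmono hv (Set.right_mem_Icc.2 hb.le) hv.2
      simp only at h2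
      rw [hyb] at h2
      linarith
    have hH : 0 < lam * y 0 - |z 0| := by nlinarith [hy0pos, hlam1, hz0le]
    obtain ⟨n, hn⟩ := exists_nat_gt (-(deriv y b) * b / (lam * y 0 - |z 0|))
    have hNpos : (0:ℝ) < (n:ℝ) + 1 := by positivity
    have hnotS : (lam - 1/((n:ℝ)+1)) ∉ S := by
      intro hmem
      have h2 := csInf_le hSbdd hmem
      have hpos : (0:ℝ) < 1/((n:ℝ)+1) := by positivity
      rw [← hlam] at h2
      linarith
    have hex : ∃ v ∈ Set.Icc (0:ℝ) b, (lam - 1/((n:ℝ)+1)) * y v < |z v| := by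
      by_contra hx
      push_neg at hx
      refine hnotS ⟨?_, fun v hv => hx v hv⟩
      have h3 : 1/((n:ℝ)+1) ≤ 1 := by
        rw [div_le_one hNpos]; linarith [Nat.cast_nonneg (α := ℝ) n]
      linarith
    obtain ⟨v, hv, hvlt⟩ := hex
    have hvb : v < b := by
      rcases lt_or_eq_of_le hv.2 with h | h
      · exact h
      · exfalso
        rw [h, hzb, hyb, mul_zero] at hvlt
        exact lt_irrefl _ hvlt
    have hbv : 0 < b - v := by linarith
    -- chord lower bound, transferred to h = lam*y - |z|
    have hchordu : ∀ σ : ℝ, |σ| = 1 →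
        ((b - v)/b) * (lam * y 0 - σ * z 0) ≤ lam * y v - σ * z v := by
      intro σ hσ
      have ha : 0 ≤ (b - v)/b := div_nonneg hbv.le hb.le
      have hc : 0 ≤ v/b := div_nonneg hv.1 hb.le
      have hac : (b - v)/b + v/b = 1 := by field_simp; ring
      have h2 := (hconcav σ hσ).2 (Set.left_mem_Icc.2 hb.le) (Set.right_mem_Icc.2 hb.le) ha hc hac
      have harg : ((b - v)/b) • (0:ℝ) + (v/b) • b = v := by
        simp only [smul_eq_mul, mul_zero, zero_add]
        field_simp
      rw [harg] at h2
      have hub : lam * y b - σ * z b = 0 := by rw [hyb, hzb0]; ring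
      simp only [smul_eq_mul] at h2
      rw [hub, mul_zero, add_zero] at h2
      exact h2
    have hchmin : ((b - v)/b) * (lam * y 0 - |z 0|) ≤ lam * y v - |z v| := by
      have ha : 0 ≤ (b - v)/b := div_nonneg hbv.le hb.le
      rcases le_total 0 (z v) with hzv | hzv
      · have h2 := hchordu 1 (by norm_num)
        have h0 : lam * y 0 - |z 0| ≤ lam * y 0 - 1 * z 0 := by
          have := le_abs_self (z 0); linarith
        calc ((b - v)/b) * (lam * y 0 - |z 0|)
            ≤ ((b - v)/b) * (lam * y 0 - 1 * z 0) := mul_le_mul_of_nonneg_left h0 ha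
          _ ≤ lam * y v - 1 * z v := h2
          _ = lam * y v - |z v| := by rw [abs_of_nonneg hzv]; ring
      · have h2 := hchordu (-1) (by norm_num)
        have h0 : lam * y 0 - |z 0| ≤ lam * y 0 - (-1) * z 0 := by
          have := neg_abs_le (z 0); linarith
        calc ((b - v)/b) * (lam * y 0 - |z 0|)
            ≤ ((b - v)/b) * (lam * y 0 - (-1) * z 0) := mul_le_mul_of_nonneg_left h0 ha
          _ ≤ lam * y v - (-1) * z v := h2
          _ = lam * y v - |z v| := by rw [abs_of_nonpos hzv]; ring
    have hhv : lam * y v - |z v| < (1/((n:ℝ)+1)) * y v := by linarith [hvlt]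
    have hyvD : y v ≤ -(deriv y b) * (b - v) := hyD v hv
    have hstep : ((b - v)/b) * (lam * y 0 - |z 0|) <
        (1/((n:ℝ)+1)) * (-(deriv y b) * (b - v)) := by
      calc ((b - v)/b) * (lam * y 0 - |z 0|) ≤ lam * y v - |z v| := hchmin
        _ < (1/((n:ℝ)+1)) * y v := hhv
        _ ≤ (1/((n:ℝ)+1)) * (-(deriv y b) * (b - v)) := by
            refine mul_le_mul_of_nonneg_left hyvD ?_
            positivity
    have h2' : ((n:ℝ)+1) * (lam * y 0 - |z 0|) * (b - v) <
        b * (-(deriv y b)) * (b - v) := by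
      have h3 := mul_lt_mul_of_pos_left hstep (mul_pos hb hNpos)
      have e1 : b * ((n:ℝ)+1) * (((b - v)/b) * (lam * y 0 - |z 0|)) =
          ((n:ℝ)+1) * (lam * y 0 - |z 0|) * (b - v) := by
        field_simp
      have e2 : b * ((n:ℝ)+1) * ((1/((n:ℝ)+1)) * (-(deriv y b) * (b - v))) =
          b * (-(deriv y b)) * (b - v) := by
        field_simp
      rw [e1, e2] at h3
      exact h3
    have h3' : ((n:ℝ)+1) * (lam * y 0 - |z 0|) < b * (-(deriv y b)) :=
      lt_of_mul_lt_mul_right h2' hbv.le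
    have h4 : -(deriv y b) * b < (n:ℝ) * (lam * y 0 - |z 0|) := (div_lt_iff₀ hH).1 hn
    nlinarith [hH]
  · -- Case y b > 0 : interior touching point
    have hhcont : ContinuousOn (fun v => lam * y v - |z v|) (Set.Icc (0:ℝ) b) := by
      intro v hv
      exact (continuousWithinAt_const.mul
        ((hycontAt v (by linarith [hv.1])).continuousWithinAt)).sub
        (((hzcont v hv.1).continuousWithinAt).abs)
    obtain ⟨w, hw, hwmin⟩ := isCompact_Icc.exists_isMinOn (Set.nonempty_Icc.2 hb.le) hhcont
    rcases lt_or_ge 0 (lam * y w - |z w|) with hmin | hmin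
    · -- can reduce lam : contradiction with sInf
      set ε := min ((lam * y w - |z w|) / y 0) lam with hε
      have hεpos : 0 < ε := lt_min (div_pos hmin hy0pos) (by linarith)
      have hmem : lam - ε ∈ S := by
        constructor
        · have : ε ≤ lam := min_le_right _ _
          linarith
        · intro v hv
          have h1 : lam * y w - |z w| ≤ lam * y v - |z v| := hwmin hv
          have hyv0 : y v ≤ y 0 :=
            hyAnti ⟨neg_nonpos.2 hTm0, hb.le⟩ ⟨by linarith [hv.1], hv.2⟩ hv.1
          have hεle : ε ≤ (lam * y w - |z w|) / y 0 := min_le_left _ _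
          have h2 : ε * y v ≤ lam * y w - |z w| := by
            calc ε * y v ≤ ((lam * y w - |z w|)/y 0) * y v :=
                mul_le_mul_of_nonneg_right hεle (hynn v ⟨by linarith [hv.1], hv.2⟩)
              _ ≤ ((lam * y w - |z w|)/y 0) * y 0 := by
                  refine mul_le_mul_of_nonneg_left hyv0 ?_
                  positivity
              _ = lam * y w - |z w| := div_mul_cancel₀ _ hy0pos.ne'
          nlinarith [h1, h2]
      have h2 := csInf_le hSbdd hmem
      rw [← hlam] at h2
      linarith
    · -- touching point
      have hwnn : 0 ≤ lam * y w - |z w| := by linarith [hlammem w hw]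
      have hw0 : lam * y w - |z w| = 0 := le_antisymm hmin hwnn
      have hwne0 : w ≠ 0 := by
        intro h; rw [h] at hw0
        nlinarith [hy0pos, hlam1, hz0le]
      have hwneb : w ≠ b := by
        intro h; rw [h, hzb] at hw0
        nlinarith [hyb, hlam1]
      have hw1 : 0 < w := lt_of_le_of_ne hw.1 (Ne.symm hwne0)
      have hw2 : w < b := lt_of_le_of_ne hw.2 hwneb
      have hywpos : 0 < y w := hypos w ⟨by linarith [hw.1], hw2⟩
      have hzw0 : z w ≠ 0 := by
        intro h
        rw [h, abs_zero] at hw0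
        nlinarith [hlam1, hywpos]
      set σ : ℝ := if 0 ≤ z w then 1 else -1 with hσdef
      have hσ : |σ| = 1 := by
        rw [hσdef]; split_ifs <;> norm_num
      have hσz : σ * z w = |z w| := by
        rw [hσdef]; split_ifs with h
        · rw [one_mul, abs_of_nonneg h]
        · rw [abs_of_neg (not_le.1 h)]; ring
      have ha : 0 < (b - w)/b := div_pos (by linarith) hb
      have hc : 0 ≤ w/b := div_nonneg hw.1 hb.le
      have hac : (b - w)/b + w/b = 1 := by field_simp; ring
      have h2 := (hconcav σ hσ).2 (Set.left_mem_Icc.2 hb.le) (Set.right_mem_Icc.2 hb.le)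
        ha.le hc hac
      have harg : ((b - w)/b) • (0:ℝ) + (w/b) • b = w := by
        simp only [smul_eq_mul, mul_zero, zero_add]
        field_simp
      rw [harg] at h2
      have huw : lam * y w - σ * z w = 0 := by rw [hσz]; exact hw0
      have hu0 : 0 < lam * y 0 - σ * z 0 := by
        have h1 : σ * z 0 ≤ |z 0| := by
          calc σ * z 0 ≤ |σ * z 0| := le_abs_self _
            _ = |z 0| := by rw [abs_mul, hσ, one_mul]
        nlinarith [hy0pos, hlam1, hz0le]
      have hub : 0 ≤ lam * y b - σ * z b := hunn σ hσ b (Set.right_mem_Icc.2 hb.le)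
      simp only [smul_eq_mul] at h2
      rw [huw] at h2
      nlinarith [mul_pos ha hu0, mul_nonneg hc hub]
end
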